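/- With the hypotheses of the previous setting ({u_θ} linearly independent spanning H, {M_θ} positive operators on K), there exists a completely positive unital map Λ with Λ(|u_θ⟩⟨u_θ|) = M_θ for all θ if and only if there exist M_{θ,θ'} with M_{θ,θ}=M_θ, the block matrix [M_{θ,θ'}] positive semidefinite, and Σ_{θ,θ'} (G_U^{-1})_{θ,θ'} M_{θ,θ'} = I_K. -/

import Mathlib

/-!
Let `U` be the matrix with columns `u θ` and `V` its inverse, so that `G_U⁻¹ = V Vᴴ` and
`∑ (G_U⁻¹)_{θθ'} |u_θ⟩⟨u_θ'| = I`. Given `Λ`, the blocks `M_{θθ'} := Λ(|u_θ⟩⟨u_θ'|)` form a positive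
semidefinite matrix because `Λ` has Kraus form, and applying `Λ` to the resolution of the identity
gives `∑ (G_U⁻¹)_{θθ'} M_{θθ'} = I`. Conversely, the block matrix `[M_{θθ'}]` is the Choi matrix of
`X ↦ ∑ X_{θθ'} M_{θθ'}`, so this map has Kraus form, and `Λ(X) := ∑ (V X Vᴴ)_{θθ'} M_{θθ'}` works
because `V |u_θ⟩⟨u_θ| Vᴴ` is the matrix unit `E_{θθ}` and `V Vᴴ = G_U⁻¹`.
-/

open Matrix Finset
open scoped ComplexOrder

noncomputable section

/-- The rank-one operator `|u⟩⟨u|` as a matrix: `(outer u) i j = u i * conj (u j)`. -/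
def outer {n : ℕ} (u : Fin n → ℂ) : Matrix (Fin n) (Fin n) ℂ :=
  Matrix.vecMulVec u (star u)

/-- A linear map on matrices is completely positive iff it admits a Kraus representation. -/
def IsCPMap {n m : ℕ}
    (Λ : Matrix (Fin n) (Fin n) ℂ →ₗ[ℂ] Matrix (Fin m) (Fin m) ℂ) : Prop :=
  ∃ (k : ℕ) (W : Fin k → Matrix (Fin m) (Fin n) ℂ),
    ∀ X, Λ X = ∑ i, W i * X * (W i)ᴴ

/-- `Λ` is unital: `Λ(I) = I`. -/
def IsUnital {n m : ℕ}
    (Λ : Matrix (Fin n) (Fin n) ℂ →ₗ[ℂ] Matrix (Fin m) (Fin m) ℂ) : Prop :=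
  Λ 1 = 1

/-- `Λ` is subunital: `Λ(I) ≤ I` in the Loewner order. -/
def IsSubunital {n m : ℕ}
    (Λ : Matrix (Fin n) (Fin n) ℂ →ₗ[ℂ] Matrix (Fin m) (Fin m) ℂ) : Prop :=
  ((1 : Matrix (Fin m) (Fin m) ℂ) - Λ 1).PosSemidef

/-- Gram matrix of a family of vectors. -/
def gram {Θ : Type*} {n : ℕ} (u : Θ → (Fin n → ℂ)) : Matrix Θ Θ ℂ :=
  Matrix.of fun θ θ' => star (u θ) ⬝ᵥ u θ'

/-- Largest real eigenvalue of a matrix (intended for Hermitian matrices). -/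
def lamMax {n : ℕ} (A : Matrix (Fin n) (Fin n) ℂ) : ℝ :=
  sSup {r : ℝ | ∃ x : Fin n → ℂ, x ≠ 0 ∧ A.mulVec x = (r : ℂ) • x}

/-- Smallest real eigenvalue of a matrix (intended for Hermitian matrices). -/
def lamMin {n : ℕ} (A : Matrix (Fin n) (Fin n) ℂ) : ℝ :=
  sInf {r : ℝ | ∃ x : Fin n → ℂ, x ≠ 0 ∧ A.mulVec x = (r : ℂ) • x}

/-- Operator (spectral) norm of a matrix. -/
def opNorm {n : ℕ} (A : Matrix (Fin n) (Fin n) ℂ) : ℝ :=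
  ‖Matrix.toEuclideanCLM (𝕜 := ℂ) A‖

section KrausMaps

variable {R ι l m n : Type*} [CommSemiring R] [StarRing R] [Fintype ι] [Fintype n]

def krausMap (W : ι → Matrix m n R) : Matrix n n R →ₗ[R] Matrix m m R where
  toFun X := ∑ i, W i * X * (W i)ᴴ
  map_add' X Y := by simp only [Matrix.mul_add, Matrix.add_mul, Finset.sum_add_distrib]
  map_smul' c X := by
    simp only [Matrix.mul_smul, Matrix.smul_mul, Finset.smul_sum, RingHom.id_apply]

lemma krausMap_apply (W : ι → Matrix m n R) (X : Matrix n n R) :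
    krausMap W X = ∑ i, W i * X * (W i)ᴴ :=
  rfl

lemma krausMap_mul_right [Fintype l] (W : ι → Matrix m l R) (V : Matrix l n R)
    (X : Matrix n n R) : krausMap (fun i => W i * V) X = krausMap W (V * X * Vᴴ) := by
  simp only [krausMap_apply, conjTranspose_mul, Matrix.mul_assoc]

lemma isCPMap_krausMap {m n : ℕ} (W : ι → Matrix (Fin m) (Fin n) ℂ) : IsCPMap (krausMap W) :=
  ⟨Fintype.card ι, W ∘ (Fintype.equivFin ι).symm, fun X =>
    (krausMap_apply W X).trans <| (Fintype.sum_equiv (Fintype.equivFin ι) _ _ fun i => by simp)⟩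

end KrausMaps

section Blocks

variable {R Θ m n : Type*} [Fintype Θ]

lemma mul_vecMulVec_mul_conjTranspose [CommSemiring R] [StarRing R] [Fintype n]
    (W : Matrix m n R) (a c : n → R) :
    W * vecMulVec a (star c) * Wᴴ = vecMulVec (W *ᵥ a) (star (W *ᵥ c)) := by
  rw [mul_vecMulVec, vecMulVec_mul, star_mulVec]

lemma sum_sum_smul_vecMulVec_col [CommSemiring R] [StarRing R] (P : Matrix m Θ R)
    (A : Matrix Θ Θ R) (Q : Matrix n Θ R) :
    ∑ θ, ∑ θ', A θ θ' • vecMulVec (P.col θ) (star (Q.col θ')) = P * A * Qᴴ := by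
  ext p q
  simp only [Matrix.sum_apply, Matrix.smul_apply, vecMulVec_apply, mul_apply, conjTranspose_apply,
    col_apply, Pi.star_apply, smul_eq_mul, Finset.sum_mul]
  rw [Finset.sum_comm]
  exact Finset.sum_congr rfl fun θ' _ => Finset.sum_congr rfl fun θ _ => by ring

def blockMatrix (B : Θ → Θ → Matrix m m R) : Matrix (m × Θ) (m × Θ) R :=
  of fun p q => B p.2 q.2 p.1 q.1

theorem IsCPMap.posSemidef_blockMatrix {m n : ℕ}
    {Λ : Matrix (Fin n) (Fin n) ℂ →ₗ[ℂ] Matrix (Fin m) (Fin m) ℂ} (hΛ : IsCPMap Λ)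
    (v : Θ → Fin n → ℂ) :
    (blockMatrix fun θ θ' => Λ (vecMulVec (v θ) (star (v θ')))).PosSemidef := by
  obtain ⟨k, W, hW⟩ := hΛ
  let C : Matrix (Fin k) (Fin m × Θ) ℂ := of fun i r => star ((W i *ᵥ v r.2) r.1)
  suffices blockMatrix (fun θ θ' => Λ (vecMulVec (v θ) (star (v θ')))) = Cᴴ * C from
    this ▸ posSemidef_conjTranspose_mul_self C
  ext r s
  simp only [blockMatrix, of_apply, hW, mul_vecMulVec_mul_conjTranspose, Matrix.sum_apply,
    vecMulVec_apply, mul_apply, conjTranspose_apply, C, star_star, Pi.star_apply]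

/-- Choi's theorem, one direction. -/
theorem PosSemidef.exists_krausMap_eq {𝕜 : Type*} [RCLike 𝕜] [Fintype m]
    {B : Θ → Θ → Matrix m m 𝕜} (hB : (blockMatrix B).PosSemidef) :
    ∃ A : m × Θ → Matrix m Θ 𝕜, ∀ X, krausMap A X = ∑ θ, ∑ θ', X θ θ' • B θ θ' := by
  classical
  obtain ⟨C, hC⟩ : ∃ C : Matrix (m × Θ) (m × Θ) 𝕜, blockMatrix B = Cᴴ * C := by
    open scoped MatrixOrder in
    exact CStarAlgebra.nonneg_iff_eq_star_mul_self.mp hB.nonneg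
  let A : m × Θ → Matrix m Θ 𝕜 := fun r => of fun p θ => star (C r (p, θ))
  have hBA : ∀ θ θ', B θ θ' = ∑ r, vecMulVec ((A r).col θ) (star ((A r).col θ')) := by
    intro θ θ'
    ext p q
    simpa [blockMatrix, mul_apply, Matrix.sum_apply, vecMulVec_apply, A] using
      congrFun (congrFun hC (p, θ)) (q, θ')
  refine ⟨A, fun X => ?_⟩
  simp_rw [krausMap_apply, ← sum_sum_smul_vecMulVec_col, hBA, Finset.smul_sum]
  rw [Finset.sum_comm]
  exact Finset.sum_congr rfl fun _ _ => Finset.sum_comm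

end Blocks

section Frames

lemma gram_eq_transpose_conjTranspose_mul {Θ : Type*} {n : ℕ} (u : Θ → Fin n → ℂ) :
    gram u = ((of u)ᵀ)ᴴ * (of u)ᵀ := by
  ext θ θ'
  simp [_root_.gram, mul_apply, dotProduct]

variable {Θ : Type*} [Fintype Θ] [DecidableEq Θ]

theorem exists_mul_eq_one_and_mul_eq_one_of_linearIndependent {K ι : Type*} [Field K]
    [Fintype ι] [DecidableEq ι] {u : Θ → ι → K} (hu : LinearIndependent K u)
    (hus : Submodule.span K (Set.range u) = ⊤) :
    ∃ V : Matrix Θ ι K, V * (of u)ᵀ = 1 ∧ (of u)ᵀ * V = 1 := by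
  let b : Module.Basis Θ K (ι → K) := .mk hu hus.ge
  have hU : (Pi.basisFun K ι).toMatrix b = (of u)ᵀ := by
    ext p θ
    simp [Module.Basis.toMatrix_apply, b]
  exact ⟨b.toMatrix (Pi.basisFun K ι), hU ▸ b.toMatrix_mul_toMatrix_flip _,
    hU ▸ (Pi.basisFun K ι).toMatrix_mul_toMatrix_flip _⟩

variable {n : ℕ} {u : Θ → Fin n → ℂ} {V : Matrix Θ (Fin n) ℂ}

lemma inv_gram_eq (hVU : V * (of u)ᵀ = 1) (hUV : (of u)ᵀ * V = 1) : (gram u)⁻¹ = V * Vᴴ := by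
  refine inv_eq_right_inv ?_
  rw [gram_eq_transpose_conjTranspose_mul, Matrix.mul_assoc, ← Matrix.mul_assoc _ V, hUV,
    Matrix.one_mul, ← conjTranspose_mul, hVU, conjTranspose_one]

lemma sum_inv_gram_smul_vecMulVec (hVU : V * (of u)ᵀ = 1) (hUV : (of u)ᵀ * V = 1) :
    ∑ θ, ∑ θ', (gram u)⁻¹ θ θ' • vecMulVec (u θ) (star (u θ')) = 1 := by
  calc _ = (of u)ᵀ * (gram u)⁻¹ * ((of u)ᵀ)ᴴ := sum_sum_smul_vecMulVec_col _ _ _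
    _ = 1 := by
      rw [inv_gram_eq hVU hUV, ← Matrix.mul_assoc, hUV, Matrix.one_mul, ← conjTranspose_mul, hUV,
        conjTranspose_one]

lemma mulVec_eq_single (hVU : V * (of u)ᵀ = 1) (θ : Θ) : V *ᵥ u θ = Pi.single θ 1 := by
  have : u θ = (of u)ᵀ *ᵥ Pi.single θ 1 := by
    ext p
    simp [mulVec_single]
  rw [this, mulVec_mulVec, hVU, one_mulVec]

end Frames

theorem stmt9_general {Θ : Type*} [Fintype Θ] [DecidableEq Θ] {n m : ℕ}
    (u : Θ → (Fin n → ℂ))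
    (hu : LinearIndependent ℂ u)
    (hus : Submodule.span ℂ (Set.range u) = ⊤)
    (M : Θ → Matrix (Fin m) (Fin m) ℂ) :
    (∃ Λ : Matrix (Fin n) (Fin n) ℂ →ₗ[ℂ] Matrix (Fin m) (Fin m) ℂ,
        IsCPMap Λ ∧ IsUnital Λ ∧ ∀ θ, Λ (outer (u θ)) = M θ) ↔
      ∃ Mb : Θ → Θ → Matrix (Fin m) (Fin m) ℂ,
        (∀ θ, Mb θ θ = M θ) ∧
        (Matrix.of fun (p q : Fin m × Θ) => Mb p.2 q.2 p.1 q.1).PosSemidef ∧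
        (∑ θ, ∑ θ', ((gram u)⁻¹ θ θ') • Mb θ θ') = (1 : Matrix (Fin m) (Fin m) ℂ) := by
  obtain ⟨V, hVU, hUV⟩ := exists_mul_eq_one_and_mul_eq_one_of_linearIndependent hu hus
  constructor
  · rintro ⟨Λ, hCP, hunit, hout⟩
    refine ⟨fun θ θ' => Λ (vecMulVec (u θ) (star (u θ'))), hout, hCP.posSemidef_blockMatrix u, ?_⟩
    simp_rw [← map_smul, ← map_sum, sum_inv_gram_smul_vecMulVec hVU hUV]
    exact hunit
  · rintro ⟨Mb, hdiag, hPSD, hsum⟩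
    obtain ⟨A, hA⟩ := PosSemidef.exists_krausMap_eq hPSD
    have hΛ (X) : krausMap (fun r => A r * V) X = ∑ θ, ∑ θ', (V * X * Vᴴ) θ θ' • Mb θ θ' :=
      (krausMap_mul_right _ _ _).trans (hA _)
    refine ⟨krausMap fun r => A r * V, isCPMap_krausMap _, ?_, fun θ => ?_⟩
    · rw [IsUnital, hΛ, Matrix.mul_one, ← inv_gram_eq hVU hUV, hsum]
    · rw [hΛ, outer, mul_vecMulVec_mul_conjTranspose, mulVec_eq_single hVU, ← hdiag θ]
      simp [vecMulVec_apply, Pi.single_apply]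

theorem stmt9 {Θ : Type*} [Fintype Θ] [DecidableEq Θ] {n m : ℕ}
    (u : Θ → (Fin n → ℂ))
    (hu : LinearIndependent ℂ u)
    (hus : Submodule.span ℂ (Set.range u) = ⊤)
    (M : Θ → Matrix (Fin m) (Fin m) ℂ) (hM : ∀ θ, (M θ).PosSemidef) :
    (∃ Λ : Matrix (Fin n) (Fin n) ℂ →ₗ[ℂ] Matrix (Fin m) (Fin m) ℂ,
        IsCPMap Λ ∧ IsUnital Λ ∧ ∀ θ, Λ (outer (u θ)) = M θ) ↔
      ∃ Mb : Θ → Θ → Matrix (Fin m) (Fin m) ℂ,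
        (∀ θ, Mb θ θ = M θ) ∧
        (Matrix.of fun (p q : Fin m × Θ) => Mb p.2 q.2 p.1 q.1).PosSemidef ∧
        (∑ θ, ∑ θ', ((gram u)⁻¹ θ θ') • Mb θ θ') = (1 : Matrix (Fin m) (Fin m) ℂ) :=
  stmt9_general u hu hus M
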